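/- Assume in addition ∑_{j≥2} (j−1) b_j < ∞ and μ_1 = ∑_{j≥1} j h_j < ∞, and write B_c′(1) = ∑_{j≥2}(j−1)b_j − c b_0. Then the mean equilibrium queue size is finite and equals E(N) = ∑_{j≥1} j π_j = π_0·[(H(u(β)) − h − μ_1)·(−β) − (H(u(β)) − h)·(B_c′(1) − β)]/β² + (1/β²)·∑_{k=1}^{c−1} π_k (c−k) b_0·[β + u(β)^{k−1}(1 − u(β))·B_c′(1)], where u(β) is the unique root of B_c(s) = β s in [0,1]. -/

import Mathlib

open Set Filter Topology

/-- The generating function `B_i(s) = ∑_{j≥0} b_j s^j + (i-1) b_0 (1-s)`. -/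
noncomputable def Bi (b : ℕ → ℝ) (i : ℕ) (s : ℝ) : ℝ :=
  (∑' j : ℕ, b j * s ^ j) + ((i : ℝ) - 1) * b 0 * (1 - s)

/-- The generating function `H(s) = ∑_{j≥1} h_j s^j`. -/
noncomputable def Hgen (hh : ℕ → ℝ) (s : ℝ) : ℝ :=
  ∑' j : ℕ, hh (j + 1) * s ^ (j + 1)

/-!
Summing the balance equations of the states `0, …, N` gives the level-crossing identity
`β ∑_{m>N} π_m + min(N+1,c) b_0 π_{N+1} = π_0 ∑_{j>N} h_j + ∑_{k=1}^{N} π_k ∑_{j≥N-k+2} b_j`.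
All its terms are nonnegative, and since `∑_N ∑_{m≥N} a_m = ∑_m (m+1) a_m` the right-hand side is
summable in `N`, with sum `π_0 μ_1 + (1 - π_0) ∑_{j≥2} (j-1) b_j`. Summing over `N` therefore proves
`∑ n π_n < ∞` and expresses `β E(N)` through `π_0, …, π_{c-1}`.

Multiplying the balance equations by `u^n` and summing, the coefficient of `∑_n π_n u^n` vanishes
exactly because `B_c(u) = β u`. What remains expresses `b_0 (1-u) ∑_{k<c} (c-k) π_k u^{k-1}` through
`π_0` and `H(u)`, and substituting this into the formula for `β E(N)` gives the claim.
-/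

open Finset

section Tails

variable {a : ℕ → ℝ}

theorem sigmaAntidiagonalEquivProd_snd_add_fst (x : Σ n : ℕ, antidiagonal n) :
    (HasAntidiagonal.sigmaAntidiagonalEquivProd x).2 +
      (HasAntidiagonal.sigmaAntidiagonalEquivProd x).1 = x.1 := by
  simp [add_comm, mem_antidiagonal.mp x.2.2]

theorem summable_prod_tails_iff (ha : 0 ≤ a) (hs : Summable a) :
    Summable (fun x : ℕ × ℕ => a (x.2 + x.1)) ↔ Summable (fun N => ∑' m, a (m + N)) :=
  (summable_prod_of_nonneg fun _ => ha _).trans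
    (and_iff_right fun N => (summable_nat_add_iff N).mpr hs)

theorem summable_prod_tails_iff_moment (ha : 0 ≤ a) :
    Summable (fun x : ℕ × ℕ => a (x.2 + x.1)) ↔ Summable (fun k : ℕ => ((k : ℝ) + 1) * a k) := by
  rw [← HasAntidiagonal.sigmaAntidiagonalEquivProd.summable_iff]
  simp only [Function.comp_def, sigmaAntidiagonalEquivProd_snd_add_fst]
  rw [summable_sigma_of_nonneg fun _ => ha _]
  simpa using fun _ _ => (hasSum_fintype _).summable

theorem summable_tails_iff (ha : 0 ≤ a) (hs : Summable a) :
    Summable (fun N => ∑' m, a (m + N)) ↔ Summable (fun k : ℕ => ((k : ℝ) + 1) * a k) :=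
  (summable_prod_tails_iff ha hs).symm.trans (summable_prod_tails_iff_moment ha)

theorem tsum_tails (ha : 0 ≤ a) (hs : Summable a) :
    ∑' N, ∑' m, a (m + N) = ∑' k : ℕ, ((k : ℝ) + 1) * a k := by
  by_cases h : Summable (fun N => ∑' m, a (m + N))
  · have hF := (summable_prod_tails_iff ha hs).mpr h
    have hσ := HasAntidiagonal.sigmaAntidiagonalEquivProd.summable_iff.mpr hF
    simp only [Function.comp_def, sigmaAntidiagonalEquivProd_snd_add_fst] at hσ
    rw [← hF.tsum_prod' fun N => (summable_nat_add_iff N).mpr hs,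
      ← HasAntidiagonal.sigmaAntidiagonalEquivProd.tsum_eq]
    simp only [sigmaAntidiagonalEquivProd_snd_add_fst]
    rw [hσ.tsum_sigma' fun _ => (hasSum_fintype _).summable]
    simp
  · rw [tsum_eq_zero_of_not_summable h,
      tsum_eq_zero_of_not_summable ((summable_tails_iff ha hs).not.mp h)]

theorem hasSum_tails (ha : 0 ≤ a) (hs : Summable a)
    (h : Summable fun k : ℕ => ((k : ℝ) + 1) * a k) :
    HasSum (fun N => ∑' m, a (m + N)) (∑' k : ℕ, ((k : ℝ) + 1) * a k) := by
  rw [← tsum_tails ha hs]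
  exact ((summable_tails_iff ha hs).mpr h).hasSum

end Tails

theorem sum_Icc_one_eq_sum_range (f : ℕ → ℝ) (m : ℕ) :
    ∑ k ∈ Icc 1 m, f k = ∑ i ∈ range m, f (i + 1) := by
  rw [← Finset.Ico_add_one_right_eq_Icc, sum_Ico_eq_sum_range]
  simp [add_comm]

theorem sum_Icc_mul_pow (g : ℕ → ℝ) (u : ℝ) (m : ℕ) :
    ∑ k ∈ Icc 1 m, g k * u ^ k = u * ∑ k ∈ Icc 1 m, g k * u ^ (k - 1) := by
  rw [mul_sum]
  refine sum_congr rfl fun k hk => ?_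
  obtain ⟨j, rfl⟩ := Nat.exists_eq_add_of_le' (mem_Icc.mp hk).1
  rw [Nat.add_sub_cancel, pow_succ]
  ring

theorem tsum_nat_add_eq_add_tsum {a : ℕ → ℝ} (ha : Summable a) (N : ℕ) :
    ∑' m, a (m + N) = a N + ∑' m, a (m + (N + 1)) := by
  rw [((summable_nat_add_iff N).mpr ha).tsum_eq_zero_add]
  simp only [zero_add, add_right_comm _ 1 N, add_assoc]

theorem summable_mul_pow {f : ℕ → ℝ} (hf : Summable f) {u : ℝ} (hu : ‖u‖ ≤ 1) :
    Summable fun n => f n * u ^ n :=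
  Summable.of_norm_bounded hf.norm fun n => by
    rw [norm_mul, norm_pow]
    exact mul_le_of_le_one_right (norm_nonneg _) (pow_le_one₀ (norm_nonneg _) hu)

theorem hasSum_min_mul {f : ℕ → ℝ} (hf : Summable f) (c : ℕ) :
    HasSum (fun n => ((min (n + 1) c : ℕ) : ℝ) * f (n + 1))
      (c * ∑' n, f (n + 1) - ∑ k ∈ Icc 1 (c - 1), ((c : ℝ) - k) * f k) := by
  have hdef : HasSum (fun n => ((c : ℝ) - (min (n + 1) c : ℕ)) * f (n + 1))
      (∑ n ∈ range (c - 1), ((c : ℝ) - (min (n + 1) c : ℕ)) * f (n + 1)) :=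
    hasSum_sum_of_ne_finset_zero fun n hn => by
      rw [min_eq_right (by have := mem_range.not.mp hn; omega), sub_self, zero_mul]
  have hval : ∑ n ∈ range (c - 1), ((c : ℝ) - (min (n + 1) c : ℕ)) * f (n + 1) =
      ∑ k ∈ Icc 1 (c - 1), ((c : ℝ) - k) * f k := by
    rw [sum_Icc_one_eq_sum_range]
    refine sum_congr rfl fun n hn => ?_
    rw [min_eq_left (by have := mem_range.mp hn; omega)]
  rw [← hval]
  have h := (((summable_nat_add_iff 1).mpr hf).hasSum.mul_left (c : ℝ)).sub hdef
  refine h.congr_fun fun n => ?_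
  ring

theorem hasSum_sum_range_mul_sub_one {p t : ℕ → ℝ} (hp : Summable p) (ht : Summable t) :
    HasSum (fun N => ∑ i ∈ range N, p i * t (N - 1 - i)) ((∑' i, p i) * ∑' l, t l) := by
  have h := hasSum_sum_range_mul_of_summable_norm hp.norm ht.norm
  rw [← hasSum_nat_add_iff' 1, sum_range_one, range_zero, sum_empty, sub_zero]
  simpa only [Nat.add_sub_cancel] using h

noncomputable def batchConv (b p : ℕ → ℝ) (n : ℕ) : ℝ :=
  ∑ k ∈ Icc 1 (n - 1), b (n - k + 1) * p k

theorem batchConv_succ (b p : ℕ → ℝ) (n : ℕ) :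
    batchConv b p (n + 1) = ∑ i ∈ range n, p (i + 1) * b (n - i + 1) := by
  rw [batchConv, Nat.add_sub_cancel, sum_Icc_one_eq_sum_range]
  refine sum_congr rfl fun i hi => ?_
  rw [mul_comm, Nat.add_sub_add_right]

theorem apply_one_eq_neg_of_tsum_eq_zero {b : ℕ → ℝ} (hb : Summable b) (h : ∑' j, b j = 0) :
    b 1 = -(b 0 + ∑' j, b (j + 2)) := by
  have h1 := hb.tsum_eq_zero_add
  rw [((summable_nat_add_iff 1).mpr hb).tsum_eq_zero_add, h] at h1
  linarith

theorem Bi_eq {b : ℕ → ℝ} (hbs : Summable b) (hb1 : b 1 = -(b 0 + ∑' j, b (j + 2))) (c : ℕ)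
    {s : ℝ} (hs : ‖s‖ ≤ 1) :
    Bi b c s = c * b 0 * (1 - s) - (∑' j, b (j + 2)) * s + s * ∑' j, b (j + 2) * s ^ (j + 1) := by
  have hbs' := summable_mul_pow hbs hs
  rw [Bi, hbs'.tsum_eq_zero_add, ((summable_nat_add_iff 1).mpr hbs').tsum_eq_zero_add,
    ← tsum_mul_left, hb1]
  simp only [pow_succ, zero_add, pow_zero]
  have : ∀ j, b (j + 1 + 1) * (s ^ j * s * s) = s * (b (j + 2) * (s ^ j * s)) := fun j => by ring
  simp only [this]
  ring

section Balance

variable {b hh π : ℕ → ℝ} {c : ℕ} {β : ℝ}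

theorem balance_succ
    (heqmid : ∀ n : ℕ, 1 ≤ n → n ≤ c - 1 →
      hh n * π 0 + (∑ k ∈ Finset.Icc 1 (n - 1), b (n - k + 1) * π k) +
        (b 1 - ((n : ℝ) - 1) * b 0 - β) * π n + ((n : ℝ) + 1) * b 0 * π (n + 1) = 0)
    (heqtail : ∀ n : ℕ, c ≤ n →
      hh n * π 0 + (∑ k ∈ Finset.Icc 1 (n - 1), b (n - k + 1) * π k) +
        (b 1 - ((c : ℝ) - 1) * b 0 - β) * π n + (c : ℝ) * b 0 * π (n + 1) = 0) (n : ℕ) :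
    hh (n + 1) * π 0 + batchConv b π (n + 1) +
      (b 1 - ((min (n + 1) c : ℕ) - 1) * b 0 - β) * π (n + 1) +
        (min (n + 2) c : ℕ) * b 0 * π (n + 2) = 0 := by
  rcases le_or_gt (n + 2) c with hle | hlt
  · rw [min_eq_left hle, min_eq_left (by omega)]
    have h := heqmid (n + 1) (by omega) (by omega)
    rw [batchConv, Nat.add_sub_cancel]
    push_cast at h ⊢
    linear_combination h
  · rw [min_eq_right (by omega), min_eq_right (by omega)]
    exact heqtail (n + 1) (by omega)

theorem level_crossing (hc : 1 ≤ c) (hπs : Summable π) (hπ1 : ∑' n, π n = 1)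
    (hhs : Summable fun j => hh (j + 1)) (hbs : Summable b)
    (hb1 : b 1 = -(b 0 + ∑' j, b (j + 2)))
    (heq0 : -((∑' j, hh (j + 1)) + β) * π 0 + b 0 * π 1 + β = 0)
    (hbal : ∀ n, hh (n + 1) * π 0 + batchConv b π (n + 1) +
      (b 1 - ((min (n + 1) c : ℕ) - 1) * b 0 - β) * π (n + 1) +
        (min (n + 2) c : ℕ) * b 0 * π (n + 2) = 0) (N : ℕ) :
    β * ∑' m, π (m + N + 1) + b 0 * (min (N + 1) c : ℕ) * π (N + 1) =
      π 0 * ∑' m, hh (m + N + 1) + ∑ i ∈ range N, π (i + 1) * ∑' m, b (m + (N - 1 - i) + 2) := by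
  induction N with
  | zero =>
    have h := hπs.tsum_eq_zero_add
    simp only [min_eq_left hc, sum_range_zero]
    push_cast
    linear_combination heq0 - β * h + β * hπ1
  | succ N ih =>
    have hπN := tsum_nat_add_eq_add_tsum ((summable_nat_add_iff 1).mpr hπs) N
    have hhN := tsum_nat_add_eq_add_tsum hhs N
    have hbs2 : Summable fun k => b (k + 2) := (summable_nat_add_iff 2).mpr hbs
    have hconv : ∑ i ∈ range (N + 1), π (i + 1) * ∑' m, b (m + (N + 1 - 1 - i) + 2) =
        ∑ i ∈ range N, π (i + 1) * ∑' m, b (m + (N - 1 - i) + 2) - batchConv b π (N + 1) +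
          π (N + 1) * ∑' m, b (m + 2) := by
      rw [sum_range_succ, batchConv_succ, ← sum_sub_distrib]
      congr 1
      · refine sum_congr rfl fun i hi => ?_
        have hi : i < N := mem_range.mp hi
        have h := tsum_nat_add_eq_add_tsum hbs2 (N - 1 - i)
        rw [show N - 1 - i + 1 = N + 1 - 1 - i by omega,
          show N - 1 - i + 2 = N - i + 1 by omega] at h
        rw [h]
        ring
      · simp
    rw [hconv]
    linear_combination hbal N + ih - β * hπN + π 0 * hhN - π (N + 1) * hb1

theorem summable_and_mean_of_level_crossing (hβ : 0 < β) (hπnn : ∀ n, 0 ≤ π n) (hπs : Summable π)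
    (hπ1 : ∑' n, π n = 1) (hb0 : 0 ≤ b 0) (hbnn : ∀ j, 0 ≤ b (j + 2))
    (hbs : Summable fun j => b (j + 2)) (hhnn : ∀ j, 0 ≤ hh (j + 1))
    (hhs : Summable fun j => hh (j + 1))
    (hconv : Summable fun j : ℕ => ((j : ℝ) + 1) * b (j + 2))
    (hμ : Summable fun j : ℕ => ((j : ℝ) + 1) * hh (j + 1))
    (hcut : ∀ N, β * ∑' m, π (m + N + 1) + b 0 * (min (N + 1) c : ℕ) * π (N + 1) =
      π 0 * ∑' m, hh (m + N + 1) + ∑ i ∈ range N, π (i + 1) * ∑' m, b (m + (N - 1 - i) + 2)) :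
    Summable (fun j : ℕ => (j : ℝ) * π j) ∧
      β * ∑' j : ℕ, (j : ℝ) * π j =
        π 0 * (∑' j : ℕ, ((j : ℝ) + 1) * hh (j + 1)) +
          (1 - π 0) * (∑' j : ℕ, ((j : ℝ) + 1) * b (j + 2)) -
          b 0 * (c * (1 - π 0) - ∑ k ∈ Icc 1 (c - 1), ((c : ℝ) - k) * π k) := by
  have hπs1 : Summable fun n => π (n + 1) := (summable_nat_add_iff 1).mpr hπs
  have hπtail : ∑' n, π (n + 1) = 1 - π 0 := by
    linarith [hπs.tsum_eq_zero_add]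
  have hTh := hasSum_tails (a := fun j => hh (j + 1)) (fun j => hhnn j) hhs hμ
  have hTb := hasSum_tails (a := fun j => b (j + 2)) (fun j => hbnn j) hbs hconv
  have hconvsum := hasSum_sum_range_mul_sub_one hπs1 hTb.summable
  rw [hπtail, hTb.tsum_eq] at hconvsum
  have hRHS := (hTh.mul_left (π 0)).add hconvsum
  have hTπ : Summable fun N => ∑' m, π (m + N + 1) := by
    refine Summable.of_nonneg_of_le (fun N => tsum_nonneg fun m => hπnn _) (fun N => ?_)
      (hRHS.summable.div_const β)
    rw [le_div_iff₀ hβ, mul_comm, ← hcut N]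
    have : 0 ≤ b 0 * (min (N + 1) c : ℕ) * π (N + 1) := by
      have := hπnn (N + 1)
      positivity
    linarith
  have hE1 := (summable_tails_iff (a := fun n => π (n + 1)) (fun n => hπnn _) hπs1).mp hTπ
  have hE : Summable fun j : ℕ => (j : ℝ) * π j := by
    refine (summable_nat_add_iff 1).mp (hE1.congr fun n => ?_)
    push_cast
    rfl
  have hEval : ∑' j : ℕ, (j : ℝ) * π j = ∑' N, ∑' m, π (m + N + 1) := by
    rw [hE.tsum_eq_zero_add, tsum_tails (a := fun n => π (n + 1)) (fun n => hπnn _) hπs1]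
    push_cast
    simp
  have hLHS := (hTπ.hasSum.mul_left β).add ((hasSum_min_mul hπs c).mul_left (b 0))
  rw [hπtail] at hLHS
  have key := hLHS.unique (hRHS.congr_fun fun N => by rw [← hcut N]; ring)
  exact ⟨hE, by rw [hEval]; linarith⟩

theorem generating_function_at_root (hc : 1 ≤ c) {u : ℝ} (hu : 0 < u) (hu1 : u ≤ 1)
    (hπs : Summable π) (hhs : Summable fun j => hh (j + 1)) (hbs : Summable b)
    (hb1 : b 1 = -(b 0 + ∑' j, b (j + 2))) (hroot : Bi b c u = β * u)
    (heq0 : -((∑' j, hh (j + 1)) + β) * π 0 + b 0 * π 1 + β = 0)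
    (hbal : ∀ n, hh (n + 1) * π 0 + batchConv b π (n + 1) +
      (b 1 - ((min (n + 1) c : ℕ) - 1) * b 0 - β) * π (n + 1) +
        (min (n + 2) c : ℕ) * b 0 * π (n + 2) = 0) :
    b 0 * (1 - u) * ∑ k ∈ Icc 1 (c - 1), ((c : ℝ) - k) * π k * u ^ (k - 1) =
      π 0 * (Hgen hh u - ∑' j, hh (j + 1)) + β * (1 - π 0) := by
  have hu' : ‖u‖ ≤ 1 := by rw [Real.norm_of_nonneg hu.le]; exact hu1
  set x : ℕ → ℝ := fun n => π (n + 1) * u ^ (n + 1)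
  set y : ℕ → ℝ := fun j => b (j + 2) * u ^ (j + 1)
  have hx : Summable x := (summable_nat_add_iff 1).mpr (summable_mul_pow hπs hu')
  have hy : Summable y :=
    (summable_nat_add_iff 1).mpr (summable_mul_pow ((summable_nat_add_iff 1).mpr hbs) hu')
  have hA : HasSum (fun n => hh (n + 1) * π 0 * u ^ (n + 2)) (u * π 0 * Hgen hh u) := by
    have hH : Summable fun j => hh (j + 1) * u ^ (j + 1) :=
      ((summable_mul_pow hhs hu').mul_right u).congr fun j => by ring
    exact (hH.hasSum.mul_left (u * π 0)).congr_fun fun n => by ring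
  have hB : HasSum (fun n => batchConv b π (n + 1) * u ^ (n + 2))
      (u * ((∑' n, x n) * ∑' j, y j)) := by
    refine ((hasSum_sum_range_mul_sub_one hx hy).mul_left u).congr_fun fun n => ?_
    rw [batchConv_succ, mul_sum, sum_mul]
    refine sum_congr rfl fun i hi => ?_
    obtain ⟨k, rfl⟩ : ∃ k, n = i + 1 + k := ⟨n - i - 1, by have := mem_range.mp hi; omega⟩
    rw [show i + 1 + k - 1 - i = k by omega, show i + 1 + k - i + 1 = k + 2 by omega]
    ring
  have hM := hasSum_min_mul (summable_mul_pow hπs hu') c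
  have hC : HasSum (fun n => (b 1 - ((min (n + 1) c : ℕ) - 1) * b 0 - β) * π (n + 1) * u ^ (n + 2))
      (-u * ((∑' j, b (j + 2)) + β) * ∑' n, x n - u * b 0 * (c * ∑' n, x n -
        ∑ k ∈ Icc 1 (c - 1), ((c : ℝ) - k) * (π k * u ^ k))) := by
    refine ((hx.hasSum.mul_left (-u * ((∑' j, b (j + 2)) + β))).sub
      (hM.mul_left (u * b 0))).congr_fun fun n => ?_
    rw [hb1]
    ring
  have hD : HasSum (fun n => (min (n + 2) c : ℕ) * b 0 * π (n + 2) * u ^ (n + 2))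
      (b 0 * (c * ∑' n, x n - ∑ k ∈ Icc 1 (c - 1), ((c : ℝ) - k) * (π k * u ^ k) - π 1 * u)) := by
    have h := (hasSum_nat_add_iff' 1).mpr hM
    rw [sum_range_one, min_eq_left hc, Nat.cast_one, one_mul, zero_add, pow_one] at h
    refine (h.mul_left (b 0)).congr_fun fun n => ?_
    simp only [add_assoc, Nat.reduceAdd]
    ring
  have key := (((hA.add hB).add hC).add hD).unique (hasSum_zero.congr_fun fun n => by
    linear_combination (u ^ (n + 2)) * hbal n)
  rw [Bi_eq hbs hb1 c hu'] at hroot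
  have hsum : ∑ k ∈ Icc 1 (c - 1), ((c : ℝ) - k) * (π k * u ^ k) =
      u * ∑ k ∈ Icc 1 (c - 1), ((c : ℝ) - k) * π k * u ^ (k - 1) := by
    rw [← sum_Icc_mul_pow]
    simp only [mul_assoc]
  refine mul_left_cancel₀ hu.ne' ?_
  linear_combination -key + (∑' n, x n) * hroot - u * heq0 - (1 - u) * b 0 * hsum

end Balance

theorem stmt17_general (c : ℕ) (hc : 1 ≤ c) (b : ℕ → ℝ)
    (hbnn : ∀ j : ℕ, j ≠ 1 → 0 ≤ b j)
    (hbsum : Summable b) (hbzero : (∑' j : ℕ, b j) = 0)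
    (hh : ℕ → ℝ) (hhnn : ∀ j : ℕ, 0 ≤ hh (j + 1))
    (hhsum : Summable (fun j : ℕ => hh (j + 1)))
    (β : ℝ) (hβ : 0 < β)
    (π : ℕ → ℝ) (hπnn : ∀ n : ℕ, 0 ≤ π n) (hπsum : Summable π)
    (hπ1 : (∑' n : ℕ, π n) = 1)
    (heq0 : -((∑' j : ℕ, hh (j + 1)) + β) * π 0 + b 0 * π 1 + β = 0)
    (heqmid : ∀ n : ℕ, 1 ≤ n → n ≤ c - 1 →
      hh n * π 0 + (∑ k ∈ Finset.Icc 1 (n - 1), b (n - k + 1) * π k) +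
        (b 1 - ((n : ℝ) - 1) * b 0 - β) * π n + ((n : ℝ) + 1) * b 0 * π (n + 1) = 0)
    (heqtail : ∀ n : ℕ, c ≤ n →
      hh n * π 0 + (∑ k ∈ Finset.Icc 1 (n - 1), b (n - k + 1) * π k) +
        (b 1 - ((c : ℝ) - 1) * b 0 - β) * π n + (c : ℝ) * b 0 * π (n + 1) = 0)
    (uβ : ℝ) (huβ : uβ ∈ Set.Ioo (0 : ℝ) 1) (huβroot : Bi b c uβ = β * uβ)
    (hconv : Summable (fun j : ℕ => ((j : ℝ) + 1) * b (j + 2)))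
    (hμ : Summable (fun j : ℕ => ((j : ℝ) + 1) * hh (j + 1))) :
    Summable (fun j : ℕ => (j : ℝ) * π j) ∧
    (∑' j : ℕ, (j : ℝ) * π j) =
      π 0 * ((Hgen hh uβ - (∑' j : ℕ, hh (j + 1)) -
            (∑' j : ℕ, ((j : ℝ) + 1) * hh (j + 1))) * (-β) -
          (Hgen hh uβ - (∑' j : ℕ, hh (j + 1))) *
            (((∑' j : ℕ, ((j : ℝ) + 1) * b (j + 2)) - (c : ℝ) * b 0) - β)) / β ^ 2 +
        (1 / β ^ 2) *
          ∑ k ∈ Finset.Icc 1 (c - 1),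
            π k * ((c : ℝ) - (k : ℝ)) * b 0 *
              (β + uβ ^ (k - 1) * (1 - uβ) *
                ((∑' j : ℕ, ((j : ℝ) + 1) * b (j + 2)) - (c : ℝ) * b 0)) := by
  obtain ⟨hu0, hu1⟩ := huβ
  have hb1 := apply_one_eq_neg_of_tsum_eq_zero hbsum hbzero
  have hbal := balance_succ heqmid heqtail
  have hcut := level_crossing hc hπsum hπ1 hhsum hbsum hb1 heq0 hbal
  obtain ⟨hE, hmean⟩ := summable_and_mean_of_level_crossing hβ hπnn hπsum hπ1
    (hbnn 0 (by norm_num)) (fun j => hbnn (j + 2) (by omega)) ((summable_nat_add_iff 2).mpr hbsum)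
    hhnn hhsum hconv hμ hcut
  have hgf := generating_function_at_root hc hu0 hu1.le hπsum hhsum hbsum hb1 huβroot heq0 hbal
  have hsplit : ∑ k ∈ Icc 1 (c - 1), π k * ((c : ℝ) - k) * b 0 *
      (β + uβ ^ (k - 1) * (1 - uβ) * ((∑' j : ℕ, ((j : ℝ) + 1) * b (j + 2)) - c * b 0)) =
        β * b 0 * ∑ k ∈ Icc 1 (c - 1), ((c : ℝ) - k) * π k +
          ((∑' j : ℕ, ((j : ℝ) + 1) * b (j + 2)) - c * b 0) *
            (b 0 * (1 - uβ) * ∑ k ∈ Icc 1 (c - 1), ((c : ℝ) - k) * π k * uβ ^ (k - 1)) := by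
    rw [mul_sum, mul_sum, mul_sum, ← sum_add_distrib]
    exact sum_congr rfl fun k _ => by ring
  refine ⟨hE, ?_⟩
  rw [hsplit, hgf]
  field_simp
  linear_combination β * hmean

theorem stmt17 (c : ℕ) (hc : 1 ≤ c) (b : ℕ → ℝ)
    (hbnn : ∀ j : ℕ, j ≠ 1 → 0 ≤ b j) (hb0 : 0 < b 0)
    (hbsum : Summable b) (hbzero : (∑' j : ℕ, b j) = 0)
    (hb2 : 0 < ∑' j : ℕ, b (j + 2))
    (hh : ℕ → ℝ) (hhnn : ∀ j : ℕ, 0 ≤ hh (j + 1))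
    (hhsum : Summable (fun j : ℕ => hh (j + 1)))
    (hhpos : 0 < ∑' j : ℕ, hh (j + 1))
    (β : ℝ) (hβ : 0 < β)
    (π : ℕ → ℝ) (hπnn : ∀ n : ℕ, 0 ≤ π n) (hπsum : Summable π)
    (hπ1 : (∑' n : ℕ, π n) = 1)
    (heq0 : -((∑' j : ℕ, hh (j + 1)) + β) * π 0 + b 0 * π 1 + β = 0)
    (heqmid : ∀ n : ℕ, 1 ≤ n → n ≤ c - 1 →
      hh n * π 0 + (∑ k ∈ Finset.Icc 1 (n - 1), b (n - k + 1) * π k) +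
        (b 1 - ((n : ℝ) - 1) * b 0 - β) * π n + ((n : ℝ) + 1) * b 0 * π (n + 1) = 0)
    (heqtail : ∀ n : ℕ, c ≤ n →
      hh n * π 0 + (∑ k ∈ Finset.Icc 1 (n - 1), b (n - k + 1) * π k) +
        (b 1 - ((c : ℝ) - 1) * b 0 - β) * π n + (c : ℝ) * b 0 * π (n + 1) = 0)
    (uβ : ℝ) (huβ : uβ ∈ Set.Ioo (0 : ℝ) 1) (huβroot : Bi b c uβ = β * uβ)
    (hconv : Summable (fun j : ℕ => ((j : ℝ) + 1) * b (j + 2)))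
    (hμ : Summable (fun j : ℕ => ((j : ℝ) + 1) * hh (j + 1))) :
    Summable (fun j : ℕ => (j : ℝ) * π j) ∧
    (∑' j : ℕ, (j : ℝ) * π j) =
      π 0 * ((Hgen hh uβ - (∑' j : ℕ, hh (j + 1)) -
            (∑' j : ℕ, ((j : ℝ) + 1) * hh (j + 1))) * (-β) -
          (Hgen hh uβ - (∑' j : ℕ, hh (j + 1))) *
            (((∑' j : ℕ, ((j : ℝ) + 1) * b (j + 2)) - (c : ℝ) * b 0) - β)) / β ^ 2 +
        (1 / β ^ 2) *
          ∑ k ∈ Finset.Icc 1 (c - 1),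
            π k * ((c : ℝ) - (k : ℝ)) * b 0 *
              (β + uβ ^ (k - 1) * (1 - uβ) *
                ((∑' j : ℕ, ((j : ℝ) + 1) * b (j + 2)) - (c : ℝ) * b 0)) :=
  stmt17_general c hc b hbnn hbsum hbzero hh hhnn hhsum β hβ π hπnn hπsum hπ1 heq0 heqmid heqtail uβ
    huβ huβroot hconv hμ
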